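/- arXiv:2306.00335 — 2 statements merged into one kernel-verified Lean document; each statement's English description precedes it below -/
import Mathlib

section
/- Let f : (i : Fin n) → ((∀ j, D j) → ℝ≥0) be the factors of a Bayesian network given in topological order with parent map pa, and let A ⊆ Fin n be a parent-closed Finset. Then for every assignment x : ∀ j, D j, the sum over all assignments y satisfying y j = x j for all j ∈ A of ∏_{i : Fin n} f i y equals ∏_{i ∈ A} f i x. In other words, marginalizing the full joint product onto the variables of a parent-closed prefix yields exactly the product of the factors of that prefix. -/
/-!
Let `i` be the least variable outside the parent-closed set `A`. Its parents all lie in `A`, so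
`insert i A` is again parent-closed and, once the coordinates in `A` are fixed, the CPD of `i`
depends on `y i` alone. Splitting the sum over the extensions of `x` according to `y i`, the
inner sums are `1` by induction and the outer one is `∑ s, f i (update x i s) = 1`. So the
factors outside `A` marginalise to `1`, while those inside `A` are constant on the extensions
of `x` by locality.
-/

/-- A factor `φ` is *local* to a set of variables `C` if it only depends on the
coordinates in `C`. -/
def IsLocal {n : ℕ} {D : Fin n → Type} (C : Finset (Fin n))
    (φ : (∀ j, D j) → NNReal) : Prop :=
  ∀ x y : ∀ j, D j, (∀ j ∈ C, x j = y j) → φ x = φ y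

open Finset Function

theorem IsLocal.mono {n : ℕ} {D : Fin n → Type} {C C' : Finset (Fin n)}
    {φ : (∀ j, D j) → NNReal} (hφ : IsLocal C φ) (hCC' : C ⊆ C') : IsLocal C' φ :=
  fun x y hxy => hφ x y fun j hj => hxy j (hCC' hj)

section Extensions

variable {ι : Type*} [Fintype ι] [DecidableEq ι] {D : ι → Type*} [∀ i, Fintype (D i)]
  [∀ i, DecidableEq (D i)]

def extensions (A : Finset ι) (x : ∀ j, D j) : Finset (∀ j, D j) :=
  univ.filter fun y => ∀ j ∈ A, y j = x j

theorem mem_extensions {A : Finset ι} {x y : ∀ j, D j} :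
    y ∈ extensions A x ↔ ∀ j ∈ A, y j = x j := by
  simp [extensions]

theorem extensions_univ (x : ∀ j, D j) : extensions univ x = {x} := by
  ext y
  simp [mem_extensions, funext_iff]

theorem filter_extensions_eq_extensions_insert {A : Finset ι} {i : ι} (hi : i ∉ A)
    (x : ∀ j, D j) (s : D i) :
    (extensions A x).filter (fun y => y i = s) = extensions (insert i A) (update x i s) := by
  ext y
  simp only [mem_filter, mem_extensions, forall_mem_insert, update_self]
  constructor
  · rintro ⟨hA, rfl⟩
    exact ⟨rfl, fun j hj => by rw [update_of_ne (ne_of_mem_of_not_mem hj hi), hA j hj]⟩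
  · rintro ⟨rfl, hA⟩
    exact ⟨fun j hj => by rw [hA j hj, update_of_ne (ne_of_mem_of_not_mem hj hi)], rfl⟩

theorem sum_extensions_eq_sum_sum_extensions_insert {M : Type*} [AddCommMonoid M]
    {A : Finset ι} {i : ι} (hi : i ∉ A) (x : ∀ j, D j) (g : (∀ j, D j) → M) :
    ∑ y ∈ extensions A x, g y =
      ∑ s : D i, ∑ y ∈ extensions (insert i A) (update x i s), g y := by
  rw [← sum_fiberwise (extensions A x) (fun y => y i) g]
  simp_rw [filter_extensions_eq_extensions_insert hi]

end Extensions

variable {n : ℕ} {D : Fin n → Type} [∀ i, Fintype (D i)] [∀ i, DecidableEq (D i)]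

theorem IsLocal.eq_of_mem_extensions {A : Finset (Fin n)} {φ : (∀ j, D j) → NNReal}
    (hφ : IsLocal A φ) {x y : ∀ j, D j} (hy : y ∈ extensions A x) : φ y = φ x :=
  hφ y x (mem_extensions.mp hy)

theorem sum_extensions_mul_eq_one {A : Finset (Fin n)} {i : Fin n} (hi : i ∉ A)
    {x : ∀ j, D j} {φ g : (∀ j, D j) → NNReal} (hφ : IsLocal (insert i A) φ)
    (hφx : ∑ s : D i, φ (update x i s) = 1)
    (hg : ∀ s, ∑ y ∈ extensions (insert i A) (update x i s), g y = 1) :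
    ∑ y ∈ extensions A x, φ y * g y = 1 := calc
  ∑ y ∈ extensions A x, φ y * g y
      = ∑ s : D i, φ (update x i s) * ∑ y ∈ extensions (insert i A) (update x i s), g y := by
        rw [sum_extensions_eq_sum_sum_extensions_insert hi]
        refine sum_congr rfl fun s _ => ?_
        rw [mul_sum]
        exact sum_congr rfl fun y hy => by rw [hφ.eq_of_mem_extensions hy]
  _ = 1 := by simp_rw [hg, mul_one, hφx]

theorem sum_extensions_prod_compl_eq_one {pa : Fin n → Finset (Fin n)}
    (hpa : ∀ i : Fin n, ∀ j ∈ pa i, j < i) {f : Fin n → (∀ j, D j) → NNReal}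
    (hlocal : ∀ i, IsLocal (insert i (pa i)) (f i))
    (hnorm : ∀ (x : ∀ j, D j) (i : Fin n), ∑ s : D i, f i (update x i s) = 1)
    (A : Finset (Fin n)) (hA : ∀ i ∈ A, pa i ⊆ A) (x : ∀ j, D j) :
    ∑ y ∈ extensions A x, ∏ i ∈ Aᶜ, f i y = 1 := by
  suffices key : ∀ B : Finset (Fin n), (∀ i ∈ Bᶜ, pa i ⊆ Bᶜ) →
      ∀ x, ∑ y ∈ extensions Bᶜ x, ∏ i ∈ B, f i y = 1 by
    simpa using key Aᶜ (by simpa using hA) x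
  intro B
  induction B using Finset.induction_on_min with
  | empty => simp [extensions_univ]
  | insert i B hlt ih =>
    intro hclosed x
    have hiB : i ∉ B := fun hi => lt_irrefl i (hlt i hi)
    have hpai : pa i ⊆ (insert i B)ᶜ := fun j hj => by
      have hji := hpa i j hj
      simpa [hji.ne] using fun hjB => lt_asymm hji (hlt j hjB)
    have hcompl : Bᶜ = insert i (insert i B)ᶜ := by
      ext j
      by_cases j = i <;> simp_all
    have hclosedB : ∀ j ∈ Bᶜ, pa j ⊆ Bᶜ := by
      rw [hcompl]
      intro j hj
      rcases mem_insert.mp hj with rfl | hj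
      · exact hpai.trans (subset_insert _ _)
      · exact (hclosed j hj).trans (subset_insert _ _)
    simp_rw [prod_insert hiB]
    refine sum_extensions_mul_eq_one (by simp) ((hlocal i).mono (insert_subset_insert i hpai))
      (hnorm x i) fun s => ?_
    rw [← hcompl]
    exact ih hclosedB _

theorem bn_marginal_onto_parent_closed_prefix_general
    (n : ℕ) (D : Fin n → Type) [∀ i, Fintype (D i)]
    [∀ i, DecidableEq (D i)]
    (pa : Fin n → Finset (Fin n)) (hpa : ∀ i : Fin n, ∀ j ∈ pa i, j < i)
    (f : ∀ _ : Fin n, (∀ j, D j) → NNReal)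
    (hlocal : ∀ i : Fin n, IsLocal (insert i (pa i)) (f i))
    (hnorm : ∀ (x : ∀ j, D j) (i : Fin n),
      ∑ s : D i, f i (Function.update x i s) = 1)
    (A : Finset (Fin n)) (hA : ∀ i ∈ A, pa i ⊆ A)
    (x : ∀ j, D j) :
    ∑ y ∈ Finset.univ.filter (fun y : ∀ j, D j => ∀ j ∈ A, y j = x j),
      ∏ i : Fin n, f i y = ∏ i ∈ A, f i x := by
  -- `rw`, not `change`: on `Fin n` the filter's decidability instance is `Nat.decidableForallFin`.
  rw [show univ.filter (fun y : ∀ j, D j => ∀ j ∈ A, y j = x j) = extensions A x by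
    ext; simp [mem_extensions]]
  calc ∑ y ∈ extensions A x, ∏ i, f i y
      = ∑ y ∈ extensions A x, (∏ i ∈ A, f i x) * ∏ i ∈ Aᶜ, f i y := by
        refine sum_congr rfl fun y hy => ?_
        rw [← prod_mul_prod_compl A]
        congr 1
        exact prod_congr rfl fun i hi =>
          ((hlocal i).mono (insert_subset hi (hA i hi))).eq_of_mem_extensions hy
    _ = ∏ i ∈ A, f i x := by
        rw [← mul_sum, sum_extensions_prod_compl_eq_one hpa hlocal hnorm A hA x, mul_one]

/-- For a Bayesian network given in topological order, marginalizing the full joint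
product onto the variables of a parent-closed prefix `A` yields exactly the product
of the factors of that prefix. -/
theorem bn_marginal_onto_parent_closed_prefix
    (n : ℕ) (D : Fin n → Type) [∀ i, Fintype (D i)] [∀ i, Nonempty (D i)]
    [∀ i, DecidableEq (D i)]
    (pa : Fin n → Finset (Fin n)) (hpa : ∀ i : Fin n, ∀ j ∈ pa i, j < i)
    (f : ∀ _ : Fin n, (∀ j, D j) → NNReal)
    (hlocal : ∀ i : Fin n, IsLocal (insert i (pa i)) (f i))
    (hnorm : ∀ (x : ∀ j, D j) (i : Fin n),
      ∑ s : D i, f i (Function.update x i s) = 1)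
    (A : Finset (Fin n)) (hA : ∀ i ∈ A, pa i ⊆ A)
    (x : ∀ j, D j) :
    ∑ y ∈ Finset.univ.filter (fun y : ∀ j, D j => ∀ j ∈ A, y j = x j),
      ∏ i : Fin n, f i y = ∏ i ∈ A, f i x :=
  bn_marginal_onto_parent_closed_prefix_general n D pa hpa f hlocal hnorm A hA x
end

section
/- Let f : (i : Fin n) → ((∀ j, D j) → ℝ≥0) be the factors of a Bayesian network given in topological order with parent map pa. Let A ⊆ B ⊆ Fin n be Finsets that are both parent-closed, let v ∈ A, let s : D v, and let x₀ : ∀ j, D j be a fixed reference assignment. Then the sum over all assignments y satisfying y v = s and y j = x₀ j for all j ∉ B of ∏_{i ∈ B} f i y equals the sum over all assignments y satisfying y v = s and y j = x₀ j for all j ∉ A of ∏_{i ∈ A} f i y. That is, the (unnormalized) prior marginal of any variable computed from a parent-closed prefix of the network is the same for every parent-closed prefix containing that variable. -/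
/-!
Summing a CPD over the states of its own variable gives `1`, so a variable on which no other
factor depends can be dropped from a prefix without changing any marginal of the remaining
variables. For parent-closed `A ⊆ B`, the topologically last variable of `B \ A` is such a leaf
of `B`, and removing it keeps `B` parent-closed; induct on `B \ A`.
-/

open Finset Function
open scoped NNReal

section Marginal

variable {ι : Type*} [Fintype ι] [DecidableEq ι] {D : ι → Type*} [∀ i, Fintype (D i)]
  [∀ i, DecidableEq (D i)]

lemma sum_filter_eqOn_compl_eq_sum_update {M : Type*} [AddCommMonoid M]
    (P : (∀ j, D j) → Prop) [DecidablePred P] {m : ι}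
    (hP : ∀ y t, P (update y m t) ↔ P y) {B : Finset ι} (hm : m ∈ B) (x₀ : ∀ j, D j)
    (g : (∀ j, D j) → M) :
    ∑ y ∈ univ.filter (fun y => P y ∧ ∀ j, j ∉ B → y j = x₀ j), g y =
      ∑ y ∈ univ.filter (fun y => P y ∧ ∀ j, j ∉ B.erase m → y j = x₀ j),
        ∑ t, g (update y m t) := by
  rw [← sum_product' (f := fun y t => g (update y m t))]
  refine sum_nbij' (fun y => (update y m (x₀ m), y m)) (fun p => update p.1 m p.2)
    ?_ ?_ ?_ ?_ ?_
  · simp only [mem_filter, mem_univ, true_and, mem_product, mem_erase, and_true]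
    refine fun y ⟨hy, hyB⟩ => ⟨(hP y _).2 hy, fun j hj => ?_⟩
    rcases eq_or_ne j m with rfl | hjm
    · exact update_self ..
    · rw [update_of_ne hjm]
      exact hyB j fun hjB => hj ⟨hjm, hjB⟩
  · simp only [mem_filter, mem_univ, true_and, mem_product, mem_erase, and_true]
    refine fun p ⟨hp, hpB⟩ => ⟨(hP p.1 p.2).2 hp, fun j hj => ?_⟩
    rw [update_of_ne (ne_of_mem_of_not_mem hm hj).symm]
    exact hpB j fun h => hj h.2
  · simp
  · simp only [mem_product, mem_filter, mem_univ, true_and, mem_erase, and_true]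
    rintro ⟨y, t⟩ ⟨-, hyB⟩
    simp only [update_idem, update_self, Prod.mk.injEq, and_true, update_eq_self_iff]
    exact (hyB m (by simp)).symm
  · simp

def prefixMarginal {R : Type*} [CommSemiring R] (f : ι → (∀ j, D j) → R) (B : Finset ι)
    (v : ι) (s : D v) (x₀ : ∀ j, D j) : R :=
  ∑ y ∈ univ.filter (fun y : ∀ j, D j => y v = s ∧ ∀ j, j ∉ B → y j = x₀ j), ∏ i ∈ B, f i y

lemma prefixMarginal_erase_of_leaf {R : Type*} [CommSemiring R] {f : ι → (∀ j, D j) → R}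
    {B : Finset ι} {m v : ι} (hm : m ∈ B) (hmv : m ≠ v)
    (hnorm : ∀ y, ∑ t, f m (update y m t) = 1)
    (hindep : ∀ i ∈ B.erase m, ∀ y t, f i (update y m t) = f i y) (s : D v) (x₀ : ∀ j, D j) :
    prefixMarginal f (B.erase m) v s x₀ = prefixMarginal f B v s x₀ := by
  unfold prefixMarginal
  rw [sum_filter_eqOn_compl_eq_sum_update (fun y => y v = s)
    (fun y t => by rw [update_of_ne hmv.symm]) hm]
  refine sum_congr rfl fun y _ => ?_
  calc ∏ i ∈ B.erase m, f i y
      = (∑ t, f m (update y m t)) * ∏ i ∈ B.erase m, f i y := by rw [hnorm, one_mul]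
    _ = ∑ t, ∏ i ∈ B, f i (update y m t) := by
      rw [sum_mul]
      refine sum_congr rfl fun t _ => ?_
      rw [← mul_prod_erase B _ hm]
      exact congrArg _ (prod_congr rfl fun i hi => (hindep i hi y t).symm)

end Marginal

def IsParentClosed {ι : Type*} (pa : ι → Finset ι) (A : Finset ι) : Prop :=
  ∀ i ∈ A, pa i ⊆ A

section BayesianNetwork

variable {n : ℕ} {D : Fin n → Type}

lemma IsLocal.apply_update_of_notMem {C : Finset (Fin n)} {φ : (∀ j, D j) → ℝ≥0}
    (hφ : IsLocal C φ) {m : Fin n} (hm : m ∉ C) (y : ∀ j, D j) (t : D m) :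
    φ (update y m t) = φ y :=
  hφ _ _ fun _ hj => update_of_ne (ne_of_mem_of_not_mem hj hm) ..

variable {pa : Fin n → Finset (Fin n)}

lemma notMem_scope_of_max_sdiff (hpa : ∀ i : Fin n, ∀ j ∈ pa i, j < i) {A B : Finset (Fin n)}
    (hA : IsParentClosed pa A) {a : Fin n} (ha : a ∉ A) (hmax : ∀ i ∈ B \ A, i ≤ a) :
    ∀ i ∈ B.erase a, a ∉ insert i (pa i) := by
  intro i hi
  rw [mem_erase] at hi
  rw [mem_insert, not_or]
  refine ⟨hi.1.symm, fun hai => ?_⟩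
  by_cases hiA : i ∈ A
  · exact ha (hA i hiA hai)
  · exact (hmax i (mem_sdiff.2 ⟨hi.2, hiA⟩)).not_gt (hpa i a hai)

theorem prefixMarginal_eq_of_isParentClosed (hpa : ∀ i : Fin n, ∀ j ∈ pa i, j < i)
    [∀ i, Fintype (D i)] [∀ i, DecidableEq (D i)] {f : Fin n → (∀ j, D j) → ℝ≥0}
    (hlocal : ∀ i, IsLocal (insert i (pa i)) (f i))
    (hnorm : ∀ (x : ∀ j, D j) (i : Fin n), ∑ s : D i, f i (update x i s) = 1)
    {A B : Finset (Fin n)} (hAB : A ⊆ B) (hA : IsParentClosed pa A) (hB : IsParentClosed pa B)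
    {v : Fin n} (hv : v ∈ A) (s : D v) (x₀ : ∀ j, D j) :
    prefixMarginal f B v s x₀ = prefixMarginal f A v s x₀ := by
  induction h : B \ A using Finset.induction_on_max generalizing B with
  | empty => rw [(sdiff_eq_empty_iff_subset.1 h).antisymm hAB]
  | insert a S hlt ih =>
    have haBA : a ∈ B \ A := h ▸ mem_insert_self a S
    obtain ⟨haB, haA⟩ := mem_sdiff.1 haBA
    have hleaf := notMem_scope_of_max_sdiff hpa hA haA fun i hi => by
      rw [h, mem_insert] at hi
      exact hi.elim le_of_eq fun hiS => (hlt i hiS).le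
    rw [← prefixMarginal_erase_of_leaf haB (ne_of_mem_of_not_mem hv haA).symm (hnorm · a)
      (fun i hi => (hlocal i).apply_update_of_notMem (hleaf i hi))]
    refine ih (subset_erase.2 ⟨hAB, haA⟩) (fun i hi j hj => mem_erase.2
      ⟨fun hja => hleaf i hi (hja ▸ mem_insert_of_mem hj), hB i (mem_of_mem_erase hi) hj⟩) ?_
    rw [erase_sdiff_comm, h, erase_insert fun haS => (hlt a haS).false]

end BayesianNetwork

theorem bn_prior_marginals_consistent_general
    (n : ℕ) (D : Fin n → Type) [∀ i, Fintype (D i)]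
    [∀ i, DecidableEq (D i)]
    (pa : Fin n → Finset (Fin n)) (hpa : ∀ i : Fin n, ∀ j ∈ pa i, j < i)
    (f : ∀ _ : Fin n, (∀ j, D j) → NNReal)
    (hlocal : ∀ i : Fin n, IsLocal (insert i (pa i)) (f i))
    (hnorm : ∀ (x : ∀ j, D j) (i : Fin n),
      ∑ s : D i, f i (Function.update x i s) = 1)
    (A B : Finset (Fin n)) (hAB : A ⊆ B)
    (hA : ∀ i ∈ A, pa i ⊆ A) (hB : ∀ i ∈ B, pa i ⊆ B)
    (v : Fin n) (hv : v ∈ A) (s : D v) (x₀ : ∀ j, D j) :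
    ∑ y ∈ Finset.univ.filter
        (fun y : ∀ j, D j => y v = s ∧ ∀ j, j ∉ B → y j = x₀ j),
      ∏ i ∈ B, f i y
      =
    ∑ y ∈ Finset.univ.filter
        (fun y : ∀ j, D j => y v = s ∧ ∀ j, j ∉ A → y j = x₀ j),
      ∏ i ∈ A, f i y := by
  have h := prefixMarginal_eq_of_isParentClosed hpa hlocal hnorm hAB hA hB hv s x₀
  unfold prefixMarginal at h
  -- `Fin n` has its own `Decidable (∀ j, _)` instance, not the generic one in `prefixMarginal`.
  convert h using 3

/-- For a Bayesian network given in topological order, the (unnormalized) prior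
marginal of a variable `v` computed from a parent-closed prefix is the same for
every parent-closed prefix containing `v`. -/
theorem bn_prior_marginals_consistent
    (n : ℕ) (D : Fin n → Type) [∀ i, Fintype (D i)] [∀ i, Nonempty (D i)]
    [∀ i, DecidableEq (D i)]
    (pa : Fin n → Finset (Fin n)) (hpa : ∀ i : Fin n, ∀ j ∈ pa i, j < i)
    (f : ∀ _ : Fin n, (∀ j, D j) → NNReal)
    (hlocal : ∀ i : Fin n, IsLocal (insert i (pa i)) (f i))
    (hnorm : ∀ (x : ∀ j, D j) (i : Fin n),
      ∑ s : D i, f i (Function.update x i s) = 1)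
    (A B : Finset (Fin n)) (hAB : A ⊆ B)
    (hA : ∀ i ∈ A, pa i ⊆ A) (hB : ∀ i ∈ B, pa i ⊆ B)
    (v : Fin n) (hv : v ∈ A) (s : D v) (x₀ : ∀ j, D j) :
    ∑ y ∈ Finset.univ.filter
        (fun y : ∀ j, D j => y v = s ∧ ∀ j, j ∉ B → y j = x₀ j),
      ∏ i ∈ B, f i y
      =
    ∑ y ∈ Finset.univ.filter
        (fun y : ∀ j, D j => y v = s ∧ ∀ j, j ∉ A → y j = x₀ j),
      ∏ i ∈ A, f i y :=
  bn_prior_marginals_consistent_general n D pa hpa f hlocal hnorm A B hAB hA hB v hv s x₀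
end
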